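/- Let N ≥ 1, z₀ > 0, b_n ∈ (0,1), a_n = 2(1−b_n)/(2N+1). Then for all real W and ζ₁,…,ζ_N: 2·z₀^{3/2}·∑_{n=1}^N (a_n/b_n)·ζ_n·W − √z₀·(1 + ∑ a_n/b_n)·W² − z₀^{5/2}·∑ (a_n(1−b_n)/b_n)·ζ_n² ≤ −(√z₀/(2N+1))·W² ≤ 0. -/

import Mathlib

/-!
Each summand of the form is a negative multiple of a perfect square:
with `a = 2(1 - b)/d` one has
`2z(a/b)ζW - (a/b + 2/d)W² - z²(a(1-b)/b)ζ² = -(2/(bd))(z(1-b)ζ - W)²`.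
Summing over `n ≤ N` and taking `d = 2N + 1` uses up `2N/d` of the unit coefficient of `W²`,
leaving exactly `-W²/d`; the overall factor `√z₀` comes from `z₀^{3/2} = √z₀ z₀` and
`z₀^{5/2} = √z₀ z₀²`.
-/

open Finset

lemma Real.rpow_three_halves {z : ℝ} (hz : 0 < z) : z ^ ((3 : ℝ) / 2) = √z * z := by
  rw [show (3 : ℝ) / 2 = 1 / 2 + 1 by norm_num, Real.rpow_add hz, Real.rpow_one,
    ← Real.sqrt_eq_rpow]

lemma Real.rpow_five_halves {z : ℝ} (hz : 0 < z) : z ^ ((5 : ℝ) / 2) = √z * z ^ 2 := by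
  rw [show (5 : ℝ) / 2 = 1 / 2 + 2 by norm_num, Real.rpow_add hz, ← Real.sqrt_eq_rpow,
    Real.rpow_two]

lemma boundary_term_eq_neg_sq {b d : ℝ} (hb : b ≠ 0) (hd : d ≠ 0) (z ζ W : ℝ) :
    2 * z * (2 * (1 - b) / d / b * ζ) * W - (2 * (1 - b) / d / b + 2 / d) * W ^ 2
      - z ^ 2 * (2 * (1 - b) / d * (1 - b) / b * ζ ^ 2)
      = -(2 / (b * d)) * (z * (1 - b) * ζ - W) ^ 2 := by
  field_simp
  ring

lemma boundary_term_nonpos {a b d : ℝ} (hb : 0 < b) (hd : 0 < d) (ha : a = 2 * (1 - b) / d)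
    (z ζ W : ℝ) :
    2 * z * (a / b * ζ) * W - (a / b + 2 / d) * W ^ 2 - z ^ 2 * (a * (1 - b) / b * ζ ^ 2) ≤ 0 := by
  rw [ha, boundary_term_eq_neg_sq hb.ne' hd.ne']
  exact mul_nonpos_of_nonpos_of_nonneg (neg_nonpos.2 (by positivity)) (sq_nonneg _)

lemma boundary_form_nonpos {ι : Type*} (s : Finset ι) {a b : ι → ℝ} {d : ℝ} (hd : 0 < d)
    (hb : ∀ i ∈ s, 0 < b i) (ha : ∀ i ∈ s, a i = 2 * (1 - b i) / d) (z W : ℝ) (ζ : ι → ℝ) :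
    2 * z * (∑ i ∈ s, a i / b i * ζ i) * W - (∑ i ∈ s, a i / b i + 2 * #s / d) * W ^ 2
      - z ^ 2 * ∑ i ∈ s, a i * (1 - b i) / b i * ζ i ^ 2 ≤ 0 := by
  have hsum := sum_nonpos fun i hi => boundary_term_nonpos (hb i hi) hd (ha i hi) z (ζ i) W
  rw [sum_sub_distrib, sum_sub_distrib, ← sum_mul, ← sum_mul, ← mul_sum, ← mul_sum,
    sum_add_distrib, sum_const, nsmul_eq_mul] at hsum
  linear_combination hsum

theorem stmt_4_general (N : ℕ) (z₀ : ℝ) (hz : 0 < z₀)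
    (b a : ℕ → ℝ)
    (hb : ∀ n, 1 ≤ n → n ≤ N → b n ∈ Set.Ioo (0 : ℝ) 1)
    (ha : ∀ n, 1 ≤ n → n ≤ N → a n = 2 * (1 - b n) / (2 * (N : ℝ) + 1))
    (W : ℝ) (ζ : ℕ → ℝ) :
    2 * z₀ ^ ((3 : ℝ) / 2) * (∑ n ∈ Finset.Icc 1 N, (a n / b n) * ζ n) * W
      - Real.sqrt z₀ * (1 + ∑ n ∈ Finset.Icc 1 N, a n / b n) * W ^ 2
      - z₀ ^ ((5 : ℝ) / 2) * ∑ n ∈ Finset.Icc 1 N, (a n * (1 - b n) / b n) * ζ n ^ 2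
      ≤ -(Real.sqrt z₀ / (2 * (N : ℝ) + 1)) * W ^ 2
    ∧ -(Real.sqrt z₀ / (2 * (N : ℝ) + 1)) * W ^ 2 ≤ 0 := by
  have hd : (0 : ℝ) < 2 * N + 1 := by positivity
  have hform := boundary_form_nonpos (Icc 1 N) hd
    (fun n hn => (hb n (mem_Icc.1 hn).1 (mem_Icc.1 hn).2).1)
    (fun n hn => ha n (mem_Icc.1 hn).1 (mem_Icc.1 hn).2) z₀ W ζ
  rw [Nat.card_Icc, Nat.add_sub_cancel] at hform
  have hscaled := mul_nonpos_of_nonneg_of_nonpos (Real.sqrt_nonneg z₀) hform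
  have hW : 0 ≤ √z₀ / (2 * N + 1) * W ^ 2 := by positivity
  refine ⟨?_, by linarith⟩
  have hunit : 2 * N / (2 * N + 1) + 1 / (2 * N + 1) = (1 : ℝ) := by field_simp
  rw [Real.rpow_three_halves hz, Real.rpow_five_halves hz]
  linear_combination hscaled + √z₀ * W ^ 2 * hunit

theorem stmt_4 (N : ℕ) (hN : 1 ≤ N) (z₀ : ℝ) (hz : 0 < z₀)
    (b a : ℕ → ℝ)
    (hb : ∀ n, 1 ≤ n → n ≤ N → b n ∈ Set.Ioo (0 : ℝ) 1)
    (ha : ∀ n, 1 ≤ n → n ≤ N → a n = 2 * (1 - b n) / (2 * (N : ℝ) + 1))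
    (W : ℝ) (ζ : ℕ → ℝ) :
    2 * z₀ ^ ((3 : ℝ) / 2) * (∑ n ∈ Finset.Icc 1 N, (a n / b n) * ζ n) * W
      - Real.sqrt z₀ * (1 + ∑ n ∈ Finset.Icc 1 N, a n / b n) * W ^ 2
      - z₀ ^ ((5 : ℝ) / 2) * ∑ n ∈ Finset.Icc 1 N, (a n * (1 - b n) / b n) * ζ n ^ 2
      ≤ -(Real.sqrt z₀ / (2 * (N : ℝ) + 1)) * W ^ 2
    ∧ -(Real.sqrt z₀ / (2 * (N : ℝ) + 1)) * W ^ 2 ≤ 0 :=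
  stmt_4_general N z₀ hz b a hb ha W ζ
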